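/- The inhomogeneous Markov chain generated by the alternative Green's function Monte Carlo transition probability G2 is strongly ergodic (with uniform limiting distribution) if there exists b > 0 such that 2b(t+1)^{−1/N} < 1 and Γ(t) ≥ −(1/(2Δt)) · log(1 − 2b(t+1)^{−1/N}) for all t ≥ 0. -/
import Mathlib


open Finset Filter

namespace QAPaper

variable {S : Type*}

/-- A probability distribution on the finite state space `S`, viewed as a vector. -/
def IsProbVec [Fintype S] (p : S → ℝ) : Prop :=
  (∀ x, 0 ≤ p x) ∧ ∑ x, p x = 1

/-- The ℓ¹ norm distance `‖p - p'‖ = ∑ₓ |p(x) - p'(x)|`. -/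
noncomputable def dist1 [Fintype S] (p p' : S → ℝ) : ℝ := ∑ x, |p x - p' x|

/-- A column-stochastic matrix: entries nonnegative, columns sum to one. -/
def IsStochastic [Fintype S] (G : Matrix S S ℝ) : Prop :=
  (∀ y x, 0 ≤ G y x) ∧ ∀ x, ∑ y, G y x = 1

/-- `prodG G t t0 = G (t-1) * G (t-2) * ⋯ * G t0`. -/
noncomputable def prodG [Fintype S] [DecidableEq S] (G : ℕ → Matrix S S ℝ) (t t0 : ℕ) :
    Matrix S S ℝ :=
  (((List.range (t - t0)).map fun k => G (t0 + k)).reverse).prod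

/-- Weak ergodicity: the distribution forgets its initial condition. -/
def WeaklyErgodic [Fintype S] [DecidableEq S] (G : ℕ → Matrix S S ℝ) : Prop :=
  ∀ t0 : ℕ, ∀ ε > (0 : ℝ), ∃ T : ℕ, ∀ t ≥ T,
    ∀ p0 p0' : S → ℝ, IsProbVec p0 → IsProbVec p0' →
      dist1 ((prodG G t t0).mulVec p0) ((prodG G t t0).mulVec p0') ≤ ε

/-- Strong ergodicity towards a fixed distribution `r`. -/
def StronglyErgodicTo [Fintype S] [DecidableEq S] (G : ℕ → Matrix S S ℝ) (r : S → ℝ) : Prop :=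
  ∀ t0 : ℕ, ∀ ε > (0 : ℝ), ∃ T : ℕ, ∀ t ≥ T,
    ∀ p0 : S → ℝ, IsProbVec p0 → dist1 ((prodG G t t0).mulVec p0) r ≤ ε

/-- Strong ergodicity. -/
def StronglyErgodic [Fintype S] [DecidableEq S] (G : ℕ → Matrix S S ℝ) : Prop :=
  ∃ r : S → ℝ, IsProbVec r ∧ StronglyErgodicTo G r

/-- The coefficient of ergodicity `α(G)`. -/
noncomputable def ergCoeff [Fintype S] [Nonempty S] (G : Matrix S S ℝ) : ℝ :=
  1 - Finset.univ.inf' Finset.univ_nonempty fun p : S × S => ∑ z, min (G z p.1) (G z p.2)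

/-- A generation probability: symmetric, vanishing on the diagonal, columns summing
to one, and irreducible. -/
structure IsGenProb [Fintype S] (P : S → S → ℝ) : Prop where
  symm : ∀ x y, P y x = P x y
  nonneg : ∀ x y, 0 ≤ P y x
  diag_zero : ∀ x, P x x = 0
  sum_one : ∀ x, ∑ y, P y x = 1
  irreducible : ∀ x y : S, ∃ n > 0, ∃ z : ℕ → S,
    z 0 = x ∧ z n = y ∧ ∀ k < n, 0 < P (z (k + 1)) (z k)

/-- An acceptance function: monotone increasing, valued in `[0,1]`,
with `g (1/u) = g u / u`. -/
structure IsAcceptFn (g : ℝ → ℝ) : Prop where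
  mono : MonotoneOn g (Set.Ici (0 : ℝ))
  maps : ∀ u : ℝ, 0 ≤ u → g u ∈ Set.Icc (0 : ℝ) 1
  ratio : ∀ u : ℝ, 0 < u → g (1 / u) = g u / u

/-- Partition function `Z(t)`. -/
noncomputable def Zfun [Fintype S] (F0 F1 : S → ℝ) (T0 : ℝ) (T1 : ℕ → ℝ) (t : ℕ) : ℝ :=
  ∑ x, Real.exp (-(F0 x) / T0 - F1 x / T1 t)

/-- Time-dependent Boltzmann distribution `q(x;t)`. -/
noncomputable def qB [Fintype S] (F0 F1 : S → ℝ) (T0 : ℝ) (T1 : ℕ → ℝ) (t : ℕ) (x : S) : ℝ :=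
  Real.exp (-(F0 x) / T0 - F1 x / T1 t) / Zfun F0 F1 T0 T1 t

/-- Transition matrix built from a generation probability `P` and an
acceptance probability `A`. -/
noncomputable def GmatOf [Fintype S] [DecidableEq S] (P : S → S → ℝ) (A : ℕ → S → S → ℝ)
    (t : ℕ) : Matrix S S ℝ :=
  Matrix.of fun y x => if y = x then 1 - ∑ z, P z x * A t z x else P y x * A t y x

/-- Transition matrix of path-integral Monte Carlo quantum annealing. -/
noncomputable def Gpimc [Fintype S] [DecidableEq S] (P : S → S → ℝ) (g : ℝ → ℝ)
    (F0 F1 : S → ℝ) (T0 : ℝ) (T1 : ℕ → ℝ) : ℕ → Matrix S S ℝ :=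
  GmatOf P fun t y x => g (qB F0 F1 T0 T1 t y / qB F0 F1 T0 T1 t x)

/-- The set `S_m` of local maxima of `F1` with respect to `P`. -/
def Sm [Fintype S] (P : S → S → ℝ) (F1 : S → ℝ) : Set S :=
  {x | ∀ y, 0 < P y x → F1 y ≤ F1 x}

/-- `x` can reach `y` in exactly `n` elementary transitions. -/
def ReachIn (P : S → S → ℝ) (n : ℕ) (x y : S) : Prop :=
  ∃ f : ℕ → S, f 0 = x ∧ f n = y ∧ ∀ k < n, 0 < P (f (k + 1)) (f k)

/-- `d(y,x)`: the minimum number of transitions needed to go from `x` to `y`. -/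
noncomputable def dSteps (P : S → S → ℝ) (x y : S) : ℕ :=
  sInf {n | ReachIn P n x y}

/-- `R = min { max { d(y,x) | y ∈ S } | x ∈ S \ S_m }`. -/
noncomputable def Rnum [Fintype S] (P : S → S → ℝ) (F1 : S → ℝ) : ℕ :=
  sInf {r | ∃ x, x ∉ Sm P F1 ∧ r = Finset.univ.sup fun y => dSteps P x y}

/-- The maximum change of `F` in a single transition. -/
noncomputable def Lmax [Fintype S] (P : S → S → ℝ) (F : S → ℝ) : ℝ :=
  sSup {v | ∃ x y : S, 0 < P y x ∧ v = |F x - F y|}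

/-- The minimum nonvanishing value of the generation probability. -/
noncomputable def wmin [Fintype S] (P : S → S → ℝ) : ℝ :=
  sInf {v | ∃ x y : S, 0 < P y x ∧ v = P y x}

/-- The set of global minima of `F1`. -/
def S1min [Fintype S] (F1 : S → ℝ) : Set S := {x | ∀ y, F1 x ≤ F1 y}

/-- The limiting distribution: proportional to `exp (-F0 x / T0)` on the set of
global minima of `F1`, and zero elsewhere. -/
noncomputable def rLimit [Fintype S] (F0 F1 : S → ℝ) (T0 : ℝ) (x : S) : ℝ :=
  if ∀ y, F1 x ≤ F1 y then
    Real.exp (-(F0 x) / T0) /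
      ∑ y ∈ Finset.univ.filter (fun y => ∀ z, F1 y ≤ F1 z), Real.exp (-(F0 y) / T0)
  else 0

/-- The ±1 value of a Boolean spin. -/
noncomputable def spin (b : Bool) : ℝ := if b then 1 else -1

/-- Classical Ising energy `E0(x) = -∑_{i<j} J_ij x_i x_j`. -/
noncomputable def E0def (N : ℕ) (J : Fin N → Fin N → ℝ) (x : Fin N → Bool) : ℝ :=
  -∑ p ∈ Finset.univ.filter (fun p : Fin N × Fin N => p.1 < p.2),
    J p.1 p.2 * spin (x p.1) * spin (x p.2)

/-- Hamming distance between spin configurations. -/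
def hamming (N : ℕ) (x y : Fin N → Bool) : ℕ :=
  (Finset.univ.filter fun i => x i ≠ y i).card

/-- GFMC weight `w(x;t) = 1 - Δt (E0(x) - E_T) + N Δt Γ(t)`. -/
noncomputable def wgt (N : ℕ) (J : Fin N → Fin N → ℝ) (Δt ET : ℝ) (Γ : ℕ → ℝ) (t : ℕ)
    (x : Fin N → Bool) : ℝ :=
  1 - Δt * (E0def N J x - ET) + N * Δt * Γ t

/-- The normalized GFMC transition probability `G1(y,x;t)`. -/
noncomputable def G1mat (N : ℕ) (J : Fin N → Fin N → ℝ) (Δt ET : ℝ) (Γ : ℕ → ℝ) (t : ℕ) :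
    Matrix (Fin N → Bool) (Fin N → Bool) ℝ :=
  Matrix.of fun y x =>
    if y = x then 1 - N * Δt * Γ t / wgt N J Δt ET Γ t x
    else if hamming N x y = 1 then Δt * Γ t / wgt N J Δt ET Γ t x
    else 0

/-- `E_min = min { E0(x) | x ∈ S }`. -/
noncomputable def Emin (N : ℕ) (J : Fin N → Fin N → ℝ) : ℝ :=
  Finset.univ.inf' Finset.univ_nonempty (E0def N J)

/-- Stationary distribution `q(x;t) = w(x;t) / ∑_y w(y;t)` of GFMC. -/
noncomputable def qGFMC (N : ℕ) (J : Fin N → Fin N → ℝ) (Δt ET : ℝ) (Γ : ℕ → ℝ) (t : ℕ)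
    (x : Fin N → Bool) : ℝ :=
  wgt N J Δt ET Γ t x / ∑ y, wgt N J Δt ET Γ t y

/-- The alternative GFMC transition probability `G2(y,x;t)`. -/
noncomputable def G2mat (N : ℕ) (Δt : ℝ) (Γ : ℕ → ℝ) (t : ℕ) :
    Matrix (Fin N → Bool) (Fin N → Bool) ℝ :=
  Matrix.of fun y x =>
    (Real.cosh (Δt * Γ t) * Real.exp (-(Δt * Γ t))) ^ N *
      Real.tanh (Δt * Γ t) ^ hamming N x y

/-- Inverse hyperbolic tangent. -/
noncomputable def artanh (x : ℝ) : ℝ := (1 / 2) * Real.log ((1 + x) / (1 - x))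

/-- The cost function of the Suzuki–Trotter representation of the TFIM:
`F0(x) = -(β/M) ∑_k ∑_{ij} J_ij S_i^(k) S_j^(k)`. -/
noncomputable def F0tfim (N M : ℕ) (β : ℝ) (J : Fin (N + 1) → Fin (N + 1) → ℝ)
    (x : Fin (N + 1) × Fin M → Bool) : ℝ :=
  -(β / M) * ∑ k : Fin M, ∑ i : Fin (N + 1), ∑ j : Fin (N + 1),
    J i j * spin (x (i, k)) * spin (x (j, k))

/-- The kinetic term of the Suzuki–Trotter representation of the TFIM:
`F1(x) = -∑_k ∑_i S_i^(k) S_i^(k+1)` with periodic boundary along the Trotter direction. -/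
noncomputable def F1tfim (N M : ℕ) [NeZero M] (x : Fin (N + 1) × Fin M → Bool) : ℝ :=
  -∑ k : Fin M, ∑ i : Fin (N + 1), spin (x (i, k)) * spin (x (i, k + 1))

/-- The ferromagnetic coupling `γ(t) = (1/2) log coth (β Γ(t) / M)` between Trotter slices. -/
noncomputable def γtfim (M : ℕ) (β : ℝ) (Γ : ℕ → ℝ) (t : ℕ) : ℝ :=
  (1 / 2) * Real.log (1 / Real.tanh (β * Γ t / M))

/-- Tsallis-type generalized acceptance ratio `u(y,x;t)`. -/
noncomputable def uGen {S : Type*} (F0 F1 : S → ℝ) (T0 : ℝ) (T1 : ℕ → ℝ) (qp : ℝ) (t : ℕ)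
    (y x : S) : ℝ :=
  Real.exp (-(F0 y - F0 x) / T0) *
    (1 + (qp - 1) * (F1 y - F1 x) / T1 t) ^ (1 / (1 - qp))


lemma hamming_comm' (N : ℕ) (x y : Fin N → Bool) : hamming N x y = hamming N y x := by
  unfold hamming; congr 1; ext i; simp [ne_comm]

lemma sum_pow_hamming (N : ℕ) (r : ℝ) (x : Fin N → Bool) :
    ∑ y : Fin N → Bool, r ^ hamming N x y = (1 + r) ^ N := by
  have h : ∀ y : Fin N → Bool,
      r ^ hamming N x y = ∏ i : Fin N, (if x i ≠ y i then r else 1) := by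
    intro y
    unfold hamming
    rw [← Finset.prod_const, Finset.prod_filter]
  calc ∑ y : Fin N → Bool, r ^ hamming N x y
      = ∑ y : Fin N → Bool, ∏ i, (if x i ≠ y i then r else 1) :=
        Finset.sum_congr rfl fun y _ => h y
    _ = ∏ i : Fin N, ∑ b : Bool, (if x i ≠ b then r else 1) :=
        (Fintype.prod_sum (κ := fun _ : Fin N => Bool) (fun i b => if x i ≠ b then r else 1)).symm
    _ = (1 + r) ^ N := by
        have h2 : ∀ i : Fin N, (∑ b : Bool, (if x i ≠ b then r else 1)) = 1 + r := by
          intro i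
          cases hx : x i <;> simp [Fintype.sum_bool, add_comm]
        rw [Finset.prod_congr rfl fun i _ => h2 i, Finset.prod_const, Finset.card_univ,
          Fintype.card_fin]

lemma contract_l1 {S : Type*} [Fintype S] (G : Matrix S S ℝ)
    (hcol : ∀ x, ∑ z, G z x = 1) (m : ℝ) (hmin : ∀ z x, m ≤ G z x)
    (v : S → ℝ) (hv : ∑ x, v x = 0) :
    ∑ z, |G.mulVec v z| ≤ (1 - (Fintype.card S : ℝ) * m) * ∑ x, |v x| := by
  have key : ∀ z, G.mulVec v z = ∑ x, (G z x - m) * v x := by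
    intro z
    have h1 : ∑ x, (G z x - m) * v x = ∑ x, G z x * v x - m * ∑ x, v x := by
      rw [Finset.mul_sum, ← Finset.sum_sub_distrib]
      exact Finset.sum_congr rfl fun x _ => by ring
    rw [h1, hv, mul_zero, sub_zero]
    rfl
  calc ∑ z, |G.mulVec v z| ≤ ∑ z, ∑ x, (G z x - m) * |v x| := by
        refine Finset.sum_le_sum fun z _ => ?_
        rw [key z]
        refine (Finset.abs_sum_le_sum_abs _ _).trans (Finset.sum_le_sum fun x _ => ?_)
        rw [abs_mul, abs_of_nonneg (sub_nonneg.2 (hmin z x))]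
    _ = ∑ x, (∑ z, (G z x - m)) * |v x| := by
        rw [Finset.sum_comm]
        exact Finset.sum_congr rfl fun x _ => (Finset.sum_mul _ _ _).symm
    _ = (1 - (Fintype.card S : ℝ) * m) * ∑ x, |v x| := by
        rw [Finset.mul_sum]
        refine Finset.sum_congr rfl fun x _ => ?_
        rw [Finset.sum_sub_distrib, hcol x, Finset.sum_const, Finset.card_univ, nsmul_eq_mul]

/-- Theorem 5: strong ergodicity of QA-GFMC 2.  The inhomogeneous
Markov chain generated by the alternative GFMC transition probability `G2` is strongly
ergodic, with uniform limiting distribution, if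
`Γ(t) ≥ -(1/(2Δt)) log (1 - 2b (t+1)^{-1/N})`. -/
theorem gfmc_G2_stronglyErgodic
    (N : ℕ) (hN : 0 < N) (Δt : ℝ) (hΔt : 0 < Δt)
    (Γ : ℕ → ℝ) (hΓpos : ∀ t, 0 < Γ t) (hΓanti : Antitone Γ)
    (b : ℝ) (hb : 0 < b)
    (hlt : ∀ t : ℕ, 2 * b * ((t : ℝ) + 1) ^ (-(1 / (N : ℝ))) < 1)
    (hsched : ∀ t : ℕ, Γ t ≥
      -(1 / (2 * Δt)) * Real.log (1 - 2 * b * ((t : ℝ) + 1) ^ (-(1 / (N : ℝ))))) :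
    StronglyErgodicTo (G2mat N Δt Γ) (fun _ => ((2 : ℝ) ^ N)⁻¹) := by
  -- basic per-time quantities
  have ha : ∀ t, 0 < Δt * Γ t := fun t => mul_pos hΔt (hΓpos t)
  have hcoshpos : ∀ t, 0 < Real.cosh (Δt * Γ t) := fun t => Real.cosh_pos _
  have hsinhpos : ∀ t, 0 < Real.sinh (Δt * Γ t) := by
    intro t
    rw [Real.sinh_eq]
    have : Real.exp (-(Δt * Γ t)) < Real.exp (Δt * Γ t) :=
      Real.exp_lt_exp.2 (by linarith [ha t])
    linarith
  have htanh_pos : ∀ t, 0 < Real.tanh (Δt * Γ t) := by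
    intro t
    rw [Real.tanh_eq_sinh_div_cosh]
    exact div_pos (hsinhpos t) (hcoshpos t)
  have htanh_le : ∀ t, Real.tanh (Δt * Γ t) ≤ 1 := by
    intro t
    rw [Real.tanh_eq_sinh_div_cosh, div_le_one (hcoshpos t)]
    have := Real.cosh_sub_sinh (Δt * Γ t)
    have := Real.exp_pos (-(Δt * Γ t))
    linarith
  have hct : ∀ t, Real.cosh (Δt * Γ t) * Real.tanh (Δt * Γ t) = Real.sinh (Δt * Γ t) := by
    intro t
    rw [Real.tanh_eq_sinh_div_cosh]
    field_simp
  have hkey : ∀ t, Real.cosh (Δt * Γ t) * Real.exp (-(Δt * Γ t)) *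
      (1 + Real.tanh (Δt * Γ t)) = 1 := by
    intro t
    have h1 : Real.cosh (Δt * Γ t) * Real.exp (-(Δt * Γ t)) * (1 + Real.tanh (Δt * Γ t)) =
        Real.exp (-(Δt * Γ t)) *
          (Real.cosh (Δt * Γ t) + Real.cosh (Δt * Γ t) * Real.tanh (Δt * Γ t)) := by ring
    rw [h1, hct t, Real.cosh_add_sinh, ← Real.exp_add]
    simp
  have hcr : ∀ t, Real.cosh (Δt * Γ t) * Real.exp (-(Δt * Γ t)) * Real.tanh (Δt * Γ t)
      = (1 - Real.exp (-(2 * (Δt * Γ t)))) / 2 := by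
    intro t
    have h1 : Real.cosh (Δt * Γ t) * Real.exp (-(Δt * Γ t)) * Real.tanh (Δt * Γ t) =
        Real.exp (-(Δt * Γ t)) * (Real.cosh (Δt * Γ t) * Real.tanh (Δt * Γ t)) := by ring
    rw [h1, hct t, Real.sinh_eq]
    have h2 : Real.exp (-(2 * (Δt * Γ t))) =
        Real.exp (-(Δt * Γ t)) * Real.exp (-(Δt * Γ t)) := by
      rw [← Real.exp_add]; ring_nf
    have h3 : Real.exp (-(Δt * Γ t)) * Real.exp (Δt * Γ t) = 1 := by
      rw [← Real.exp_add]; simp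
    rw [h2]
    nlinarith [Real.exp_pos (-(Δt * Γ t))]
  -- stochasticity
  have hcol : ∀ t x, ∑ y, G2mat N Δt Γ t y x = 1 := by
    intro t x
    simp only [G2mat, Matrix.of_apply]
    rw [← Finset.mul_sum, sum_pow_hamming, ← mul_pow, hkey t, one_pow]
  have hrow : ∀ t z, ∑ x, G2mat N Δt Γ t z x = 1 := by
    intro t z
    simp only [G2mat, Matrix.of_apply]
    have h1 : ∀ x : Fin N → Bool,
        Real.tanh (Δt * Γ t) ^ hamming N x z = Real.tanh (Δt * Γ t) ^ hamming N z x := by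
      intro x; rw [hamming_comm']
    rw [Finset.sum_congr rfl fun x _ => by rw [h1 x], ← Finset.mul_sum, sum_pow_hamming,
      ← mul_pow, hkey t, one_pow]
  -- minimum entry
  set mlow : ℕ → ℝ := fun t => ((1 - Real.exp (-(2 * (Δt * Γ t)))) / 2) ^ N with hmlow
  have hmin : ∀ t z x, mlow t ≤ G2mat N Δt Γ t z x := by
    intro t z x
    simp only [G2mat, Matrix.of_apply, hmlow]
    rw [← hcr t, mul_pow]
    refine mul_le_mul_of_nonneg_left ?_ (by positivity)
    refine pow_le_pow_of_le_one (htanh_pos t).le (htanh_le t) ?_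
    calc hamming N x z ≤ Finset.univ.card := Finset.card_filter_le _ _
      _ = N := by simp
  -- cardinality
  have hcard : (Fintype.card (Fin N → Bool) : ℝ) = (2 : ℝ) ^ N := by
    rw [Fintype.card_fun]
    push_cast
    simp
  have husum : ∑ x : Fin N → Bool, ((2 : ℝ) ^ N)⁻¹ = 1 := by
    rw [Finset.sum_const, Finset.card_univ, nsmul_eq_mul, hcard]
    field_simp
  -- G2 fixes the uniform vector
  have hGu : ∀ t z, (G2mat N Δt Γ t).mulVec (fun _ => ((2 : ℝ) ^ N)⁻¹) z = ((2 : ℝ) ^ N)⁻¹ := by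
    intro t z
    show ∑ x, G2mat N Δt Γ t z x * ((2 : ℝ) ^ N)⁻¹ = ((2 : ℝ) ^ N)⁻¹
    rw [← Finset.sum_mul, hrow t z, one_mul]
  -- G2 preserves total mass
  have hsum : ∀ t (p : (Fin N → Bool) → ℝ),
      ∑ z, (G2mat N Δt Γ t).mulVec p z = ∑ x, p x := by
    intro t p
    show ∑ z, ∑ x, G2mat N Δt Γ t z x * p x = _
    rw [Finset.sum_comm]
    exact Finset.sum_congr rfl fun x _ => by rw [← Finset.sum_mul, hcol t x, one_mul]
  -- schedule bound : c / (t+1) ≤ 2^N * mlow t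
  set c : ℝ := (2 * b) ^ N with hc
  have hc0 : 0 < c := pow_pos (by linarith) N
  have hqpos : ∀ t : ℕ, 0 < 2 * b * ((t : ℝ) + 1) ^ (-(1 / (N : ℝ))) := by
    intro t
    have h1 : (0 : ℝ) < ((t : ℝ) + 1) ^ (-(1 / (N : ℝ))) :=
      Real.rpow_pos_of_pos (by positivity) _
    positivity
  have hqe : ∀ t : ℕ, 2 * b * ((t : ℝ) + 1) ^ (-(1 / (N : ℝ)))
      ≤ 1 - Real.exp (-(2 * (Δt * Γ t))) := by
    intro t
    have h1 : (0 : ℝ) < 1 - 2 * b * ((t : ℝ) + 1) ^ (-(1 / (N : ℝ))) := by linarith [hlt t]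
    have h2 := hsched t
    have h3 : -(2 * (Δt * Γ t)) ≤
        Real.log (1 - 2 * b * ((t : ℝ) + 1) ^ (-(1 / (N : ℝ)))) := by
      have h4 : -(1 / (2 * Δt)) * Real.log (1 - 2 * b * ((t : ℝ) + 1) ^ (-(1 / (N : ℝ))))
          ≤ Γ t := h2
      have h5 : (0 : ℝ) < 2 * Δt := by linarith
      have h7 := mul_le_mul_of_nonneg_left h4 h5.le
      have h8 : (2 * Δt) * (-(1 / (2 * Δt)) *
          Real.log (1 - 2 * b * ((t : ℝ) + 1) ^ (-(1 / (N : ℝ)))))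
          = -Real.log (1 - 2 * b * ((t : ℝ) + 1) ^ (-(1 / (N : ℝ)))) := by
        field_simp
      have h9 : (2 * Δt) * Γ t = 2 * (Δt * Γ t) := by ring
      rw [h8, h9] at h7
      linarith
    have h6 : Real.exp (-(2 * (Δt * Γ t))) ≤
        1 - 2 * b * ((t : ℝ) + 1) ^ (-(1 / (N : ℝ))) := by
      calc Real.exp (-(2 * (Δt * Γ t)))
          ≤ Real.exp (Real.log (1 - 2 * b * ((t : ℝ) + 1) ^ (-(1 / (N : ℝ))))) :=
            Real.exp_le_exp.2 h3
        _ = _ := Real.exp_log h1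
    linarith
  have hqN : ∀ t : ℕ, (2 * b * ((t : ℝ) + 1) ^ (-(1 / (N : ℝ)))) ^ N = c / ((t : ℝ) + 1) := by
    intro t
    rw [mul_pow, ← Real.rpow_natCast (((t : ℝ) + 1) ^ (-(1 / (N : ℝ)))) N,
      ← Real.rpow_mul (by positivity)]
    have h1 : (-(1 / (N : ℝ))) * (N : ℝ) = -1 := by
      field_simp
    rw [h1, Real.rpow_neg_one, hc, div_eq_mul_inv]
  have hmfac : ∀ t : ℕ, c / ((t : ℝ) + 1) ≤ (2 : ℝ) ^ N * mlow t := by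
    intro t
    rw [← hqN t, hmlow]
    have h1 : (2 : ℝ) ^ N * ((1 - Real.exp (-(2 * (Δt * Γ t)))) / 2) ^ N
        = (2 * ((1 - Real.exp (-(2 * (Δt * Γ t)))) / 2)) ^ N := by rw [mul_pow]
    rw [h1]
    have h2 : 2 * ((1 - Real.exp (-(2 * (Δt * Γ t)))) / 2)
        = 1 - Real.exp (-(2 * (Δt * Γ t))) := by ring
    rw [h2]
    exact pow_le_pow_left₀ (hqpos t).le (hqe t) N
  -- product step
  intro t0 ε hε
  have hbase : prodG (G2mat N Δt Γ) t0 t0 = 1 := by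
    simp [prodG]
  have hstep : ∀ t, t0 ≤ t → prodG (G2mat N Δt Γ) (t + 1) t0
      = G2mat N Δt Γ t * prodG (G2mat N Δt Γ) t t0 := by
    intro t ht
    unfold prodG
    rw [Nat.succ_sub ht, List.range_succ, List.map_append, List.reverse_append]
    simp [Nat.add_sub_cancel' ht]
  -- harmonic sums
  set Hs : ℕ → ℝ := fun n => ∑ i ∈ Finset.range n, (1 / ((i : ℝ) + 1)) with hHs
  have hHsucc : ∀ t : ℕ, Hs (t + 1) = Hs t + 1 / ((t : ℝ) + 1) := by
    intro t
    rw [hHs]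
    simp [Finset.sum_range_succ]
  -- main induction
  have main : ∀ p0 : (Fin N → Bool) → ℝ, IsProbVec p0 → ∀ t, t0 ≤ t →
      (∑ x, (prodG (G2mat N Δt Γ) t t0).mulVec p0 x = 1) ∧
      dist1 ((prodG (G2mat N Δt Γ) t t0).mulVec p0) (fun _ => ((2 : ℝ) ^ N)⁻¹)
        ≤ Real.exp (-(c * (Hs t - Hs t0))) * 2 := by
    intro p0 hp0 t ht
    induction t, ht using Nat.le_induction with
    | base =>
        rw [hbase, Matrix.one_mulVec]
        refine ⟨hp0.2, ?_⟩
        have h1 : dist1 p0 (fun _ => ((2 : ℝ) ^ N)⁻¹) ≤ 2 := by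
          unfold dist1
          calc ∑ x, |p0 x - ((2 : ℝ) ^ N)⁻¹|
              ≤ ∑ x : Fin N → Bool, (|p0 x| + |((2 : ℝ) ^ N)⁻¹|) :=
                Finset.sum_le_sum fun x _ => abs_sub _ _
            _ = ∑ x, |p0 x| + ∑ x : Fin N → Bool, |((2 : ℝ) ^ N)⁻¹| :=
                Finset.sum_add_distrib
            _ = 2 := by
                have h2 : ∀ x, |p0 x| = p0 x := fun x => abs_of_nonneg (hp0.1 x)
                have h3 : |((2 : ℝ) ^ N)⁻¹| = ((2 : ℝ) ^ N)⁻¹ :=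
                  abs_of_nonneg (by positivity)
                rw [Finset.sum_congr rfl fun x _ => h2 x, hp0.2,
                  Finset.sum_congr rfl fun (x : Fin N → Bool) _ => h3, husum]
                norm_num
        simpa using h1
    | succ t ht ih =>
        obtain ⟨ih1, ih2⟩ := ih
        set pt := (prodG (G2mat N Δt Γ) t t0).mulVec p0 with hpt
        have hnew : (prodG (G2mat N Δt Γ) (t + 1) t0).mulVec p0
            = (G2mat N Δt Γ t).mulVec pt := by
          rw [hstep t ht, ← Matrix.mulVec_mulVec]
        constructor
        · rw [hnew, hsum t pt, ih1]
        · rw [hnew]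
          -- contraction
          have hv0 : ∑ x, (pt x - ((2 : ℝ) ^ N)⁻¹) = 0 := by
            rw [Finset.sum_sub_distrib, ih1, husum]
            ring
          have hdiff : ∀ z, (G2mat N Δt Γ t).mulVec pt z - ((2 : ℝ) ^ N)⁻¹
              = (G2mat N Δt Γ t).mulVec (fun x => pt x - ((2 : ℝ) ^ N)⁻¹) z := by
            intro z
            have h4 : (G2mat N Δt Γ t).mulVec (fun x => pt x - ((2 : ℝ) ^ N)⁻¹) z
                = (G2mat N Δt Γ t).mulVec pt z
                  - (G2mat N Δt Γ t).mulVec (fun _ => ((2 : ℝ) ^ N)⁻¹) z := by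
              have := Matrix.mulVec_sub (G2mat N Δt Γ t) pt (fun _ => ((2 : ℝ) ^ N)⁻¹)
              exact congrFun this z
            rw [h4, hGu t z]
          have hcontr : dist1 ((G2mat N Δt Γ t).mulVec pt) (fun _ => ((2 : ℝ) ^ N)⁻¹)
              ≤ (1 - (2 : ℝ) ^ N * mlow t) * dist1 pt (fun _ => ((2 : ℝ) ^ N)⁻¹) := by
            unfold dist1
            rw [Finset.sum_congr rfl fun z _ => by rw [hdiff z]]
            have := contract_l1 (G2mat N Δt Γ t) (hcol t) (mlow t) (hmin t)
              (fun x => pt x - ((2 : ℝ) ^ N)⁻¹) hv0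
            rwa [hcard] at this
          have hfac : 1 - (2 : ℝ) ^ N * mlow t ≤ Real.exp (-(c / ((t : ℝ) + 1))) := by
            have h5 := hmfac t
            have h6 : 1 - c / ((t : ℝ) + 1) ≤ Real.exp (-(c / ((t : ℝ) + 1))) := by
              have := Real.add_one_le_exp (-(c / ((t : ℝ) + 1)))
              linarith
            linarith
          have hdnn : 0 ≤ dist1 pt (fun _ => ((2 : ℝ) ^ N)⁻¹) :=
            Finset.sum_nonneg fun x _ => abs_nonneg _
          calc dist1 ((G2mat N Δt Γ t).mulVec pt) (fun _ => ((2 : ℝ) ^ N)⁻¹)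
              ≤ (1 - (2 : ℝ) ^ N * mlow t) * dist1 pt (fun _ => ((2 : ℝ) ^ N)⁻¹) := hcontr
            _ ≤ Real.exp (-(c / ((t : ℝ) + 1))) * dist1 pt (fun _ => ((2 : ℝ) ^ N)⁻¹) :=
                mul_le_mul_of_nonneg_right hfac hdnn
            _ ≤ Real.exp (-(c / ((t : ℝ) + 1))) * (Real.exp (-(c * (Hs t - Hs t0))) * 2) :=
                mul_le_mul_of_nonneg_left ih2 (Real.exp_nonneg _)
            _ = Real.exp (-(c * (Hs (t + 1) - Hs t0))) * 2 := by
                rw [← mul_assoc, ← Real.exp_add, hHsucc t]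
                ring_nf
  -- choose T
  have htd : Tendsto Hs atTop atTop := by
    rw [hHs]
    exact_mod_cast Real.tendsto_sum_range_one_div_nat_succ_atTop
  obtain ⟨T, hT⟩ := Filter.eventually_atTop.1
    (Filter.tendsto_atTop.1 htd (Hs t0 + (|Real.log (ε / 2)| + 1) / c))
  refine ⟨max T t0, fun t ht p0 hp0 => ?_⟩
  have ht0 : t0 ≤ t := le_trans (le_max_right _ _) ht
  have hTt : T ≤ t := le_trans (le_max_left _ _) ht
  have hmain := (main p0 hp0 t ht0).2
  have hHt := hT t hTt
  have hexp : Real.exp (-(c * (Hs t - Hs t0))) * 2 ≤ ε := by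
    have h1 : |Real.log (ε / 2)| + 1 ≤ c * (Hs t - Hs t0) := by
      have h2 : (|Real.log (ε / 2)| + 1) / c ≤ Hs t - Hs t0 := by linarith
      calc |Real.log (ε / 2)| + 1 = c * ((|Real.log (ε / 2)| + 1) / c) := by
            field_simp
        _ ≤ c * (Hs t - Hs t0) := mul_le_mul_of_nonneg_left h2 hc0.le
    have h3 : -(c * (Hs t - Hs t0)) ≤ Real.log (ε / 2) := by
      have := neg_abs_le (Real.log (ε / 2))
      linarith
    have h4 : Real.exp (-(c * (Hs t - Hs t0))) ≤ ε / 2 := by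
      calc Real.exp (-(c * (Hs t - Hs t0)))
          ≤ Real.exp (Real.log (ε / 2)) := Real.exp_le_exp.2 h3
        _ = ε / 2 := Real.exp_log (by linarith)
    linarith
  exact hmain.trans hexp

end QAPaper
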